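/- Assume τ ≥ 0. Then the map θ_0 : S_{n,δ} → S_{n',δ'} is injective. -/

import Mathlib

namespace PanUnitary

/-- `part μ i` : the `i`-th largest element (0-indexed) of the multiset `μ`, `0` beyond.
Viewing a multiset of naturals as a partition (identified up to trailing zeros),
this is the `(i+1)`-st part. -/
def part (μ : Multiset ℕ) (i : ℕ) : ℕ := ((μ.sort (· ≤ ·)).reverse).getD i 0

/-- Remove the zero parts: the canonical (zero-free) representative of a partition. -/
def strip (μ : Multiset ℕ) : Multiset ℕ := μ.filter (fun x => 0 < x)

/-- `transpose μ j` is the `(j+1)`-st part of the transposed (conjugate) partition. -/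
def transpose (μ : Multiset ℕ) (j : ℕ) : ℕ := (μ.filter (fun x => j < x)).card

/-- `Preceq f g` : the partition whose parts are given by `f` is `⪯` the one given by `g`,
i.e. `g i - 1 ≤ f i ≤ g i` for all `i`. -/
def Preceq (f g : ℕ → ℕ) : Prop := ∀ i, g i ≤ f i + 1 ∧ f i ≤ g i

/-- An integer `δ` is admissible if it is even and nonnegative, or odd and negative. -/
def IsAdmissible (δ : ℤ) : Prop := (Even δ ∧ 0 ≤ δ) ∨ (Odd δ ∧ δ < 0)

/-- `ε = 1` if `δ` is even, `ε = 0` if `δ` is odd. -/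
def eps (δ : ℤ) : ℕ := if Even δ then 1 else 0

/-- `d (d + 1) / 2` where `d = |δ|`. -/
def halfTri (δ : ℤ) : ℕ := δ.natAbs * (δ.natAbs + 1) / 2

/-- A symbol: a pair of rows of natural numbers (the strict-decrease condition is
part of the predicate `Symbol.IsUnitary`). -/
structure Symbol where
  A : List ℕ
  B : List ℕ

def Symbol.defect (Λ : Symbol) : ℤ := (Λ.A.length : ℤ) - (Λ.B.length : ℤ)

/-- The row `(a_1, …, a_m)` gives the partition with parts `(a_i - e)/2 - (m - i)`. -/
def upsRow (L : List ℕ) (e : ℕ) : Multiset ℕ :=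
  ((L.mapIdx fun i a => (a - e) / 2 - (L.length - 1 - i) : List ℕ) : Multiset ℕ)

/-- The bipartition `Υ(Λ)` (canonical zero-free representatives). -/
def Symbol.Upsilon (Λ : Symbol) : Multiset ℕ × Multiset ℕ :=
  (strip (upsRow Λ.A (eps Λ.defect)), strip (upsRow Λ.B (1 - eps Λ.defect)))

/-- `Λ` is a unitary-type symbol of (admissible) defect `δ`. -/
def Symbol.IsUnitary (Λ : Symbol) (δ : ℤ) : Prop :=
  Λ.A.Pairwise (· > ·) ∧ Λ.B.Pairwise (· > ·) ∧ Λ.defect = δ ∧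
    (∀ a ∈ Λ.A, a % 2 = eps δ) ∧ (∀ b ∈ Λ.B, b % 2 = 1 - eps δ)

/-- The rank `2(|μ| + |ν|) + d(d+1)/2` of a unitary-type symbol. -/
def Symbol.rank (Λ : Symbol) : ℕ :=
  2 * (Λ.Upsilon.1.sum + Λ.Upsilon.2.sum) + halfTri Λ.defect

/-- Equivalence of symbols: same defect and same `Υ`. -/
def Symbol.Equiv (Λ Λ' : Symbol) : Prop :=
  Λ.defect = Λ'.defect ∧ Λ.Upsilon = Λ'.Upsilon

/-- Membership in `S_{n,δ}`: a unitary-type symbol of admissible defect `δ` and rank `n`. -/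
def InS (n : ℕ) (δ : ℤ) (Λ : Symbol) : Prop :=
  IsAdmissible δ ∧ Λ.IsUnitary δ ∧ Λ.rank = n

/-- `Σ min(x,y)` over all unordered pairs of (positions of) entries of the list. -/
def pairMinSum : List ℕ → ℕ
  | [] => 0
  | x :: xs => (xs.map (fun y => min x y)).sum + pairMinSum xs

/-- All entries of a symbol (both rows). -/
def Symbol.entries (Λ : Symbol) : List ℕ := Λ.A ++ Λ.B

/-- `ord(Λ) = Σ min(x,y) − Σ_{i=1}^{⌊N/2⌋} (N − 2i)²`. -/
def Symbol.ord (Λ : Symbol) : ℤ :=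
  (pairMinSum Λ.entries : ℤ) -
    ∑ i ∈ Finset.Icc 1 (Λ.entries.length / 2),
      ((Λ.entries.length : ℤ) - 2 * (i : ℤ)) ^ 2

/-- The shift of a unitary-type symbol. -/
def Symbol.shift (Λ : Symbol) : Symbol :=
  ⟨Λ.A.map (fun a => a + 2) ++ [eps Λ.defect],
   Λ.B.map (fun b => b + 2) ++ [1 - eps Λ.defect]⟩

/-- The defect `δ'` for the second member of the dual pair. -/
def deltaPrime (n n' : ℕ) (δ : ℤ) : ℤ :=
  if Even (n + n') then (if δ = 0 then 0 else -δ + 1) else -δ - 1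

/-- `τ = ((n' − d'(d'+1)/2) − (n − d(d+1)/2)) / 2`. -/
def tau (n n' : ℕ) (δ : ℤ) : ℚ :=
  (((n' : ℚ) - (halfTri (deltaPrime n n' δ) : ℚ)) - ((n : ℚ) - (halfTri δ : ℚ))) / 2

/-- `τ` as a natural number (equal to `τ` whenever `τ` is a nonnegative integer). -/
def tauNat (n n' : ℕ) (δ : ℤ) : ℕ :=
  ((n' + halfTri δ) - (n + halfTri (deltaPrime n n' δ))) / 2

/-- The set of (canonical, zero-free) bipartitions `(μ;ν)` with
`2(|μ|+|ν|) + d(d+1)/2 = n`; equivalently `|μ|+|ν| = (n − d(d+1)/2)/2`. -/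
def BipSet (n : ℕ) (δ : ℤ) : Set (Multiset ℕ × Multiset ℕ) :=
  {p | (∀ x ∈ p.1, 0 < x) ∧ (∀ x ∈ p.2, 0 < x) ∧ 2 * (p.1.sum + p.2.sum) + halfTri δ = n}

/-- The `⪯`-conditions (on transposes) defining the relation `Θ`, at the level of
bipartitions `p = Υ(Λ)`, `q = Υ(Λ')`. -/
def PrecCond (n n' : ℕ) (p q : Multiset ℕ × Multiset ℕ) : Prop :=
  if Even (n + n') then
    Preceq (transpose p.2) (transpose q.1) ∧ Preceq (transpose q.2) (transpose p.1)
  else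
    Preceq (transpose p.1) (transpose q.2) ∧ Preceq (transpose q.1) (transpose p.2)

/-- `Θ` at the level of bipartitions (classes of symbols). -/
def ThetaB (n n' : ℕ) (δ : ℤ) (p q : Multiset ℕ × Multiset ℕ) : Prop :=
  q ∈ BipSet n' (deltaPrime n n' δ) ∧ PrecCond n n' p q

/-- `Λ' ∈ Θ(Λ)` for symbols, where `Λ ∈ S_{n,δ}`. -/
def InTheta (n n' : ℕ) (δ : ℤ) (Λ Λ' : Symbol) : Prop :=
  InS n' (deltaPrime n n' δ) Λ' ∧ PrecCond n n' Λ.Upsilon Λ'.Upsilon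

/-- `Λ' ∈ Θ(Λ)_k`. -/
def InThetaK (n n' : ℕ) (δ : ℤ) (k : ℕ) (Λ Λ' : Symbol) : Prop :=
  InTheta n n' δ Λ Λ' ∧
    (if Even (n + n') then (Λ'.Upsilon.2.sum : ℤ) = (Λ.Upsilon.1.sum : ℤ) - (k : ℤ)
     else (Λ'.Upsilon.1.sum : ℤ) = (Λ.Upsilon.2.sum : ℤ) - (k : ℤ))

/-- Remove (one copy of) the largest part. -/
def mtail (μ : Multiset ℕ) : Multiset ℕ := μ.erase (part μ 0)

/-- `θ_k` at the level of bipartitions: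
even case: `(μ;ν) ↦ (sort(ν, τ+k); sort(μ_2, …, μ_{m_1}, μ_1 − k))`;
odd case: `(μ;ν) ↦ (sort(ν_2, …, ν_{m_2}, ν_1 − k); sort(μ, τ+k))`. -/
def thetaBip (n n' : ℕ) (δ : ℤ) (k : ℕ) (p : Multiset ℕ × Multiset ℕ) :
    Multiset ℕ × Multiset ℕ :=
  if Even (n + n') then
    (strip ((tauNat n n' δ + k) ::ₘ p.2), strip ((part p.1 0 - k) ::ₘ mtail p.1))
  else
    (strip ((part p.2 0 - k) ::ₘ mtail p.2), strip ((tauNat n n' δ + k) ::ₘ p.1))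

/-- The unitary-type symbol of defect `δ` with `Υ = p`, whose first row has `m1`
entries and second row `m2` entries (valid whenever `m1, m2` are large enough). -/
def symbolOfBip (δ : ℤ) (p : Multiset ℕ × Multiset ℕ) (m1 m2 : ℕ) : Symbol :=
  ⟨List.ofFn (fun i : Fin m1 => 2 * (part p.1 (i : ℕ) + (m1 - 1 - (i : ℕ))) + eps δ),
   List.ofFn (fun j : Fin m2 => 2 * (part p.2 (j : ℕ) + (m2 - 1 - (j : ℕ))) + (1 - eps δ))⟩

/-- A canonical representative symbol of defect `δ` with `Υ = p`. -/
def canonicalSymbol (δ : ℤ) (p : Multiset ℕ × Multiset ℕ) : Symbol :=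
  symbolOfBip δ p (max p.1.card ((p.2.card : ℤ) + δ).toNat)
    (((max p.1.card ((p.2.card : ℤ) + δ).toNat : ℤ) - δ).toNat)

/-- A symbol representing the class `θ_k(Λ)`. -/
def thetaSymbol (n n' : ℕ) (δ : ℤ) (k : ℕ) (Λ : Symbol) : Symbol :=
  canonicalSymbol (deltaPrime n n' δ) (thetaBip n n' δ k Λ.Upsilon)

/-- `K(Λ)`: `μ_1` in the even case, `ν_1` in the odd case. -/
def bigK (n n' : ℕ) (Λ : Symbol) : ℕ :=
  if Even (n + n') then part Λ.Upsilon.1 0 else part Λ.Upsilon.2 0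

/-- `ord` at the level of bipartitions (well defined on classes). -/
def ordB (δ : ℤ) (p : Multiset ℕ × Multiset ℕ) : ℤ := (canonicalSymbol δ p).ord

/-- Strict lexicographic order on partitions. -/
def PartLexLt (μ ν : Multiset ℕ) : Prop :=
  ∃ i, (∀ j < i, part μ j = part ν j) ∧ part μ i < part ν i

/-- The total order on `S_{n,δ}` (and on `S_{n',δ'}`), at the level of bipartitions;
it depends only on the parity of `n + n'`. -/
def BLt (n n' : ℕ) (p q : Multiset ℕ × Multiset ℕ) : Prop :=
  if Even (n + n') then
    p.1.sum < q.1.sum ∨ (p.1.sum = q.1.sum ∧ PartLexLt p.1 q.1) ∨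
      (p.1 = q.1 ∧ PartLexLt p.2 q.2)
  else
    p.2.sum < q.2.sum ∨ (p.2.sum = q.2.sum ∧ PartLexLt p.2 q.2) ∨
      (p.2 = q.2 ∧ PartLexLt p.1 q.1)

/-- `q ∈ Θ♭(p)` relative to a given partial function `bar` (playing the role of `θ̄`). -/
def InFlat (n n' : ℕ) (δ : ℤ)
    (bar : Multiset ℕ × Multiset ℕ → Option (Multiset ℕ × Multiset ℕ))
    (p q : Multiset ℕ × Multiset ℕ) : Prop :=
  ThetaB n n' δ p q ∧ ∀ r ∈ BipSet n δ, BLt n n' r p → bar r ≠ some q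

/-- `bar` is the partial function `θ̄` defined by recursion along the total order:
on each `p ∈ S_{n,δ}`, if `Θ♭(p) ≠ ∅` then `bar p` is defined and is the smallest
element (w.r.t. the total order) of maximal `ord` in `Θ♭(p)`. -/
def IsThetaBar (n n' : ℕ) (δ : ℤ)
    (bar : Multiset ℕ × Multiset ℕ → Option (Multiset ℕ × Multiset ℕ)) : Prop :=
  (∀ p, p ∉ BipSet n δ → bar p = none) ∧
  ∀ p ∈ BipSet n δ,
    ((∃ q, InFlat n n' δ bar p q) → ∃ q, bar p = some q) ∧
    ∀ q, bar p = some q →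
      InFlat n n' δ bar p q ∧
      (∀ r, InFlat n n' δ bar p r →
        ordB (deltaPrime n n' δ) r ≤ ordB (deltaPrime n n' δ) q) ∧
      (∀ r, InFlat n n' δ bar p r →
        ordB (deltaPrime n n' δ) r = ordB (deltaPrime n n' δ) q → r ≠ q → BLt n n' q r)

lemma pos_of_mem_strip {μ : Multiset ℕ} {x : ℕ} (hx : x ∈ strip μ) : 0 < x :=
  Multiset.of_mem_filter hx

lemma strip_eq_self {μ : Multiset ℕ} (h : ∀ x ∈ μ, 0 < x) : strip μ = μ :=
  Multiset.filter_eq_self.2 h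

@[simp]
lemma strip_strip (μ : Multiset ℕ) : strip (strip μ) = strip μ :=
  strip_eq_self fun _ => pos_of_mem_strip

lemma erase_strip_cons (t : ℕ) (ν : Multiset ℕ) : (strip (t ::ₘ ν)).erase t = strip ν := by
  rcases Nat.eq_zero_or_pos t with rfl | ht
  · simp only [strip, Multiset.filter_cons_of_neg _ (lt_irrefl 0)]
    exact Multiset.erase_of_notMem fun h => lt_irrefl 0 (pos_of_mem_strip h)
  · rw [strip, Multiset.filter_cons_of_pos (p := fun x => 0 < x) _ ht, Multiset.erase_cons_head]
    rfl

lemma part_zero_mem {μ : Multiset ℕ} (hμ : μ ≠ 0) : part μ 0 ∈ μ := by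
  have hlen : 0 < (μ.sort (· ≤ ·)).reverse.length := by
    simpa [Multiset.card_pos] using hμ
  rw [← Multiset.mem_sort (· ≤ ·), ← List.mem_reverse, part, List.getD_eq_getElem _ _ hlen]
  exact List.getElem_mem _

lemma strip_cons_part_zero_mtail (μ : Multiset ℕ) : strip (part μ 0 ::ₘ mtail μ) = strip μ := by
  rcases eq_or_ne μ 0 with rfl | hμ
  · simp [mtail, strip, part]
  · rw [mtail, Multiset.cons_erase (part_zero_mem hμ)]

lemma strip_thetaBip (n n' : ℕ) (δ : ℤ) (k : ℕ) (p : Multiset ℕ × Multiset ℕ) :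
    (strip (thetaBip n n' δ k p).1, strip (thetaBip n n' δ k p).2) = thetaBip n n' δ k p := by
  unfold thetaBip
  split_ifs <;> simp only [strip_strip]

/-- `θ_0` carries one half of the bipartition across intact and adds the single part `τ` to the
other, so erasing `τ` recovers it. -/
lemma strip_eq_of_thetaBip_zero_eq (n n' : ℕ) (δ : ℤ) {p q : Multiset ℕ × Multiset ℕ}
    (h : thetaBip n n' δ 0 p = thetaBip n n' δ 0 q) :
    strip p.1 = strip q.1 ∧ strip p.2 = strip q.2 := by
  unfold thetaBip at h
  split_ifs at h
  · obtain ⟨h₁, h₂⟩ := Prod.mk.inj h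
    simp only [Nat.sub_zero, strip_cons_part_zero_mtail] at h₂
    exact ⟨h₂, by rw [← erase_strip_cons (tauNat n n' δ + 0), h₁, erase_strip_cons]⟩
  · obtain ⟨h₁, h₂⟩ := Prod.mk.inj h
    simp only [Nat.sub_zero, strip_cons_part_zero_mtail] at h₁
    exact ⟨by rw [← erase_strip_cons (tauNat n n' δ + 0), h₂, erase_strip_cons], h₁⟩

lemma defect_canonicalSymbol (δ : ℤ) (p : Multiset ℕ × Multiset ℕ) :
    (canonicalSymbol δ p).defect = δ := by
  simp only [canonicalSymbol, symbolOfBip, Symbol.defect, List.length_ofFn]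
  have := Int.self_le_toNat ((p.2.card : ℤ) + δ)
  have := le_max_right p.1.card ((p.2.card : ℤ) + δ).toNat
  omega

lemma upsRow_ofFn (g : ℕ → ℕ) (m e : ℕ) :
    upsRow (List.ofFn fun i : Fin m => 2 * (g i + (m - 1 - i)) + e) e =
      ((List.ofFn fun i : Fin m => g i : List ℕ) : Multiset ℕ) := by
  unfold upsRow
  congr 1
  apply List.ext_getElem (by simp)
  intro i _ hi
  simp only [List.getElem_mapIdx, List.getElem_ofFn, List.length_ofFn]
  simp only [List.length_ofFn] at hi
  omega

lemma ofFn_part {μ : Multiset ℕ} {m : ℕ} (hm : Multiset.card μ ≤ m) :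
    (List.ofFn fun i : Fin m => part μ i) =
      (μ.sort (· ≤ ·)).reverse ++ List.replicate (m - Multiset.card μ) 0 := by
  have hlen : (μ.sort (· ≤ ·)).reverse.length = Multiset.card μ := by simp
  apply List.ext_getElem (by simp; omega)
  intro i _ _
  rw [List.getElem_ofFn, part]
  rcases lt_or_ge i (μ.sort (· ≤ ·)).reverse.length with hi | hi
  · rw [List.getElem_append_left hi, List.getD_eq_getElem _ _ hi]
  · rw [List.getElem_append_right hi, List.getD_eq_default _ _ hi, List.getElem_replicate]

lemma strip_ofFn_part {μ : Multiset ℕ} {m : ℕ} (hm : Multiset.card μ ≤ m) :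
    strip ((List.ofFn fun i : Fin m => part μ i : List ℕ) : Multiset ℕ) = strip μ := by
  have hzeros : ((List.replicate (m - Multiset.card μ) 0 : List ℕ) : Multiset ℕ).filter
      (fun x => 0 < x) = 0 :=
    Multiset.filter_eq_nil.2 fun x hx => by simp_all
  rw [ofFn_part hm, ← Multiset.coe_add, strip, Multiset.filter_add, hzeros, add_zero,
    Multiset.coe_reverse, Multiset.sort_eq]
  rfl

lemma Upsilon_canonicalSymbol (δ : ℤ) (p : Multiset ℕ × Multiset ℕ) :
    (canonicalSymbol δ p).Upsilon = (strip p.1, strip p.2) := by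
  have := Int.self_le_toNat ((p.2.card : ℤ) + δ)
  have := le_max_right p.1.card ((p.2.card : ℤ) + δ).toNat
  rw [Symbol.Upsilon, defect_canonicalSymbol]
  simp only [canonicalSymbol, symbolOfBip, upsRow_ofFn]
  rw [strip_ofFn_part (le_max_left _ _), strip_ofFn_part (by omega)]

lemma strip_Upsilon (Λ : Symbol) : (strip Λ.Upsilon.1, strip Λ.Upsilon.2) = Λ.Upsilon := by
  simp only [Symbol.Upsilon, strip_strip]

theorem statement9_general (n n' : ℕ) (δ : ℤ) :
    ∀ Λ₁ Λ₂ : Symbol, InS n δ Λ₁ → InS n δ Λ₂ →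
      (thetaSymbol n n' δ 0 Λ₁).Equiv (thetaSymbol n n' δ 0 Λ₂) → Λ₁.Equiv Λ₂ := by
  rintro Λ₁ Λ₂ ⟨-, ⟨-, -, hdef₁, -⟩, -⟩ ⟨-, ⟨-, -, hdef₂, -⟩, -⟩ ⟨-, hU⟩
  rw [thetaSymbol, thetaSymbol, Upsilon_canonicalSymbol, Upsilon_canonicalSymbol,
    strip_thetaBip, strip_thetaBip] at hU
  obtain ⟨hμ, hν⟩ := strip_eq_of_thetaBip_zero_eq n n' δ hU
  refine ⟨hdef₁.trans hdef₂.symm, ?_⟩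
  rw [← strip_Upsilon Λ₁, ← strip_Upsilon Λ₂, hμ, hν]

/-- If `τ ≥ 0`, the map `θ_0 : S_{n,δ} → S_{n',δ'}` is injective (on classes). -/
theorem statement9 (n n' : ℕ) (δ : ℤ) (hτ : 0 ≤ tau n n' δ) :
    ∀ Λ₁ Λ₂ : Symbol, InS n δ Λ₁ → InS n δ Λ₂ →
      (thetaSymbol n n' δ 0 Λ₁).Equiv (thetaSymbol n n' δ 0 Λ₂) → Λ₁.Equiv Λ₂ :=
  statement9_general n n' δ

end PanUnitary
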